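/- arXiv:2004.02613 — 2 statements merged into one kernel-verified Lean document; each statement's English description precedes it below -/
import Mathlib

section
/- Let d be a metric on a mapping f : X → Y. Define X* = ⋃_{y ∈ Y} (C*_y × {y}), where C*_y is the set of equivalence classes of Cauchy nets tied to y under ∼_y, and define d*((Φ*,y),(Φ'*,y')) = lim_{(α,α') ∈ D×D'} d(Φ(α),Φ'(α')). Then d* is well-defined (independent of the choice of representatives) and is a pseudometric on X*. -/
open Filter Topology TopologicalSpace Set

/-- A net `Φ : D → Z` is Cauchy with respect to a distance function `ρ`. -/
def FCauchy {Z : Type*} {D : Type*} [Preorder D] (ρ : Z → Z → ℝ) (Φ : D → Z) : Prop :=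
  ∀ ε > 0, ∃ α : D, ∀ β ≥ α, ∀ γ ≥ α, ρ (Φ β) (Φ γ) < ε

/-- A net `Φ : D → Z` is tied to `y` for the mapping `g : Z → Y`. -/
def FTied {Z : Type*} {Y : Type} {D : Type*} [TopologicalSpace Y] [Preorder D] (g : Z → Y) (y : Y) (Φ : D → Z) : Prop :=
  ∀ O ∈ nhds y, ∃ α : D, ∀ β ≥ α, g (Φ β) ∈ O

/-- Cauchy net tied to `y`. -/
def FCauchyTied {Z : Type*} {Y : Type} {D : Type*} [TopologicalSpace Y] [Preorder D]
    (ρ : Z → Z → ℝ) (g : Z → Y) (y : Y) (Φ : D → Z) : Prop :=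
  FCauchy ρ Φ ∧ FTied g y Φ

/-- `d` (= `dist`) is a metric on the mapping `f` : it is a pseudometric on `X`
restricting to a metric on every fibre. -/
def IsMetricOnMap {X Y : Type} [PseudoMetricSpace X] (f : X → Y) : Prop :=
  ∀ x x' : X, f x = f x' → dist x x' = 0 → x = x'

/-- The metric topology τ(f,d) of the mapping: join of the pseudometric topology and
the initial topology of `f`. -/
def mapTopology {X Y : Type} [PseudoMetricSpace X] [tY : TopologicalSpace Y]
    (f : X → Y) : TopologicalSpace X :=
  (inferInstance : TopologicalSpace X) ⊔ TopologicalSpace.induced f tY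

/-- `d` is a complete metric on the mapping `f`. -/
def IsCompleteMetricMap {X Y : Type} [PseudoMetricSpace X] [TopologicalSpace Y]
    (f : X → Y) : Prop :=
  ∀ y : Y, ∀ F : Filter X, F.NeBot →
    (∀ N ∈ nhds y, f ⁻¹' N ∈ F) →
    (∀ ε > 0, ∃ S ∈ F, Metric.diam S < ε) →
    ∃ x : X, f x = y ∧ @ClusterPt X (mapTopology f) x F

/-- A net on `Z` : a directed index type together with a map to `Z`. -/
structure CNet (Z : Type) : Type 1 where
  D : Type
  [pre : Preorder D]
  [ne : Nonempty D]
  [dir : IsDirected D (· ≤ ·)]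
  Φ : D → Z

attribute [instance] CNet.pre CNet.ne CNet.dir

def NTC {Z Y : Type} [TopologicalSpace Y] (ρ : Z → Z → ℝ) (g : Z → Y) (y : Y)
    (N : CNet Z) : Prop :=
  FCauchyTied ρ g y N.Φ

/-- The equivalence Φ ∼_y Φ' of Cauchy nets. -/
def EquivNets {Z : Type} (ρ : Z → Z → ℝ) (N M : CNet Z) : Prop :=
  ∀ ε > 0, ∃ (γ : N.D) (γ' : M.D), ∀ α ≥ γ, ∀ α' ≥ γ', ρ (N.Φ α) (M.Φ α') < ε

/-- Cauchy nets tied to `y`. -/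
def TNet {Z Y : Type} [TopologicalSpace Y] (ρ : Z → Z → ℝ) (g : Z → Y) (y : Y) : Type 1 :=
  {N : CNet Z // NTC ρ g y N}

/-- The completion X* = ⋃_y (C*_y × {y}). -/
def Xstar {Z Y : Type} [TopologicalSpace Y] (ρ : Z → Z → ℝ) (g : Z → Y) : Type 1 :=
  Σ y : Y, Quot (fun N M : TNet ρ g y => EquivNets ρ N.1 M.1)

def fstar {Z Y : Type} [TopologicalSpace Y] (ρ : Z → Z → ℝ) (g : Z → Y) :
    Xstar ρ g → Y := Sigma.fst

/-- The limit of the real net (α,α') ↦ ρ(Φ(α),Φ'(α')). -/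
noncomputable def netLim {Z : Type} (ρ : Z → Z → ℝ) (N M : CNet Z) : ℝ :=
  limUnder atTop (fun p : N.D × M.D => ρ (N.Φ p.1) (M.Φ p.2))

noncomputable def dstar {Z Y : Type} [TopologicalSpace Y] (ρ : Z → Z → ℝ) (g : Z → Y)
    (p q : Xstar ρ g) : ℝ :=
  netLim ρ (Quot.out p.2).1 (Quot.out q.2).1

/-- The constant net at a point. -/
def constNet {Z : Type} (z : Z) : CNet Z := { D := PUnit, Φ := fun _ => z }

/-- The canonical embedding i : X → X*. -/
def iEmb {X Y : Type} [PseudoMetricSpace X] [TopologicalSpace Y] (f : X → Y) (x : X) :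
    Xstar dist f :=
  ⟨f x, Quot.mk _ ⟨constNet x,
    ⟨fun ε hε => ⟨PUnit.unit, fun _ _ _ _ => by
        simpa [constNet] using hε⟩,
     fun O hO => ⟨PUnit.unit, fun _ _ => mem_of_mem_nhds hO⟩⟩⟩⟩

/-- Topology generated by the open balls of a distance function. -/
def ballTop {Z : Type*} (ρ : Z → Z → ℝ) : TopologicalSpace Z :=
  generateFrom {s : Set Z | ∃ (z : Z) (ε : ℝ), s = {w : Z | ρ z w < ε}}

/-- The metric topology τ(f*,d*) on X*. -/
noncomputable def starTop {Z Y : Type} [tY : TopologicalSpace Y]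
    (ρ : Z → Z → ℝ) (g : Z → Y) : TopologicalSpace (Xstar ρ g) :=
  ballTop (dstar ρ g) ⊔ TopologicalSpace.induced (fstar ρ g) tY


instance myProdDirected {A B : Type*} [Preorder A] [Preorder B]
    [IsDirected A (· ≤ ·)] [IsDirected B (· ≤ ·)] : IsDirected (A × B) (· ≤ ·) :=
  ⟨fun p q => by
    obtain ⟨a, ha, ha'⟩ := exists_ge_ge p.1 q.1
    obtain ⟨b, hb, hb'⟩ := exists_ge_ge p.2 q.2
    exact ⟨(a, b), ⟨ha, hb⟩, ⟨ha', hb'⟩⟩⟩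

lemma myNetCauchy {X : Type} [PseudoMetricSpace X] (N M : CNet X)
    (hN : FCauchy dist N.Φ) (hM : FCauchy dist M.Φ) :
    Cauchy (map (fun p : N.D × M.D => dist (N.Φ p.1) (M.Φ p.2)) atTop) := by
  rw [Metric.cauchy_iff]
  refine ⟨map_neBot, fun ε hε => ?_⟩
  obtain ⟨a₀, ha⟩ := hN (ε/2) (by linarith)
  obtain ⟨b₀, hb⟩ := hM (ε/2) (by linarith)
  refine ⟨(fun p : N.D × M.D => dist (N.Φ p.1) (M.Φ p.2)) '' Set.Ici (a₀, b₀),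
    image_mem_map (Ici_mem_atTop _), ?_⟩
  rintro _ ⟨⟨a, b⟩, ⟨ha1, hb1⟩, rfl⟩ _ ⟨⟨a', b'⟩, ⟨ha2, hb2⟩, rfl⟩
  have h1 := ha a ha1 a' ha2
  have h2 := hb b hb1 b' hb2
  have t1 : |dist (N.Φ a) (M.Φ b) - dist (N.Φ a') (M.Φ b)| ≤ dist (N.Φ a) (N.Φ a') :=
    abs_dist_sub_le _ _ _
  have t2 : |dist (M.Φ b) (N.Φ a') - dist (M.Φ b') (N.Φ a')| ≤ dist (M.Φ b) (M.Φ b') :=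
    abs_dist_sub_le _ _ _
  simp only [Real.dist_eq]
  have key := abs_sub_le (dist (N.Φ a) (M.Φ b)) (dist (N.Φ a') (M.Φ b)) (dist (N.Φ a') (M.Φ b'))
  have t2' : |dist (N.Φ a') (M.Φ b) - dist (N.Φ a') (M.Φ b')| ≤ dist (M.Φ b) (M.Φ b') := by
    rw [dist_comm (N.Φ a') (M.Φ b), dist_comm (N.Φ a') (M.Φ b')]; exact t2
  linarith [le_trans t1 h1.le, le_trans t2' h2.le]

lemma myNetLim_tendsto {X : Type} [PseudoMetricSpace X] (N M : CNet X)
    (hN : FCauchy dist N.Φ) (hM : FCauchy dist M.Φ) :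
    Tendsto (fun p : N.D × M.D => dist (N.Φ p.1) (M.Φ p.2)) atTop (𝓝 (netLim dist N M)) :=
  (myNetCauchy N M hN hM).le_nhds_lim

/-- Eventual closeness of the net to its limit. -/
lemma myNetLim_event {X : Type} [PseudoMetricSpace X] (N M : CNet X)
    (hN : FCauchy dist N.Φ) (hM : FCauchy dist M.Φ) {ε : ℝ} (hε : 0 < ε) :
    ∃ a : N.D × M.D, ∀ b ≥ a, |dist (N.Φ b.1) (M.Φ b.2) - netLim dist N M| < ε := by
  have h := Metric.tendsto_nhds.mp (myNetLim_tendsto N M hN hM) ε hε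
  simp only [Real.dist_eq] at h
  exact eventually_atTop.mp h

lemma myNetLim_nonneg {X : Type} [PseudoMetricSpace X] (N M : CNet X)
    (hN : FCauchy dist N.Φ) (hM : FCauchy dist M.Φ) : 0 ≤ netLim dist N M :=
  ge_of_tendsto (myNetLim_tendsto N M hN hM) (Eventually.of_forall fun p => dist_nonneg)

lemma myNetLim_congr {X : Type} [PseudoMetricSpace X] (N N' M M' : CNet X)
    (hN : FCauchy dist N.Φ) (hN' : FCauchy dist N'.Φ)
    (hM : FCauchy dist M.Φ) (hM' : FCauchy dist M'.Φ)
    (hNN' : EquivNets dist N N') (hMM' : EquivNets dist M M') :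
    netLim dist N M = netLim dist N' M' := by
  set L := netLim dist N M
  set L' := netLim dist N' M'
  have key : ∀ ε > 0, |L - L'| ≤ 4 * ε := by
    intro ε hε
    obtain ⟨⟨a₀, b₀⟩, hab⟩ := myNetLim_event N M hN hM hε
    obtain ⟨⟨a₀', b₀'⟩, hab'⟩ := myNetLim_event N' M' hN' hM' hε
    obtain ⟨γ, γ', hγ⟩ := hNN' ε hε
    obtain ⟨δ, δ', hδ⟩ := hMM' ε hε
    obtain ⟨a, haa, hag⟩ := exists_ge_ge a₀ γ
    obtain ⟨b, hbb, hbg⟩ := exists_ge_ge b₀ δ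
    obtain ⟨a', haa', hag'⟩ := exists_ge_ge a₀' γ'
    obtain ⟨b', hbb', hbg'⟩ := exists_ge_ge b₀' δ'
    have e1 := hab (a, b) ⟨haa, hbb⟩
    have e2 := hab' (a', b') ⟨haa', hbb'⟩
    have e3 := hγ a hag a' hag'
    have e4 := hδ b hbg b' hbg'
    simp only at e1 e2
    have t1 : |dist (N.Φ a) (M.Φ b) - dist (N'.Φ a') (M.Φ b)| ≤ dist (N.Φ a) (N'.Φ a') :=
      abs_dist_sub_le _ _ _
    have t2 : |dist (N'.Φ a') (M.Φ b) - dist (N'.Φ a') (M'.Φ b')| ≤ dist (M.Φ b) (M'.Φ b') := by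
      rw [dist_comm (N'.Φ a') (M.Φ b), dist_comm (N'.Φ a') (M'.Φ b')]
      exact abs_dist_sub_le _ _ _
    have k1 := abs_sub_le (dist (N.Φ a) (M.Φ b)) (dist (N'.Φ a') (M.Φ b)) (dist (N'.Φ a') (M'.Φ b'))
    have k2 := abs_sub_le L (dist (N.Φ a) (M.Φ b)) L'
    have k3 := abs_sub_le (dist (N.Φ a) (M.Φ b)) (dist (N'.Φ a') (M'.Φ b')) L'
    rw [abs_sub_comm] at e1
    linarith
  by_contra h
  have hpos : 0 < |L - L'| := abs_pos.mpr (sub_ne_zero.mpr h)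
  have := key (|L - L'| / 5) (by linarith)
  linarith

lemma myNetLim_self {X : Type} [PseudoMetricSpace X] (N : CNet X)
    (hN : FCauchy dist N.Φ) : netLim dist N N = 0 := by
  refine le_antisymm ?_ (myNetLim_nonneg N N hN hN)
  have : ∀ ε > 0, netLim dist N N ≤ ε := by
    intro ε hε
    obtain ⟨α₀, hα⟩ := hN ε hε
    refine le_of_tendsto (myNetLim_tendsto N N hN hN) ?_
    rw [eventually_atTop]
    exact ⟨(α₀, α₀), fun b hb => (hα b.1 hb.1 b.2 hb.2).le⟩
  by_contra h
  push_neg at h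
  have := this (netLim dist N N / 2) (by linarith)
  linarith

lemma myNetLim_symm {X : Type} [PseudoMetricSpace X] (N M : CNet X)
    (hN : FCauchy dist N.Φ) (hM : FCauchy dist M.Φ) :
    netLim dist N M = netLim dist M N := by
  have hswap : Tendsto (Prod.swap : M.D × N.D → N.D × M.D) atTop atTop := by
    intro s hs
    rw [mem_atTop_sets] at hs
    rw [mem_map, mem_atTop_sets]
    obtain ⟨a, ha⟩ := hs
    exact ⟨a.swap, fun b hb => ha b.swap ⟨hb.2, hb.1⟩⟩
  have h1 : Tendsto (fun p : M.D × N.D => dist (M.Φ p.1) (N.Φ p.2)) atTop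
      (𝓝 (netLim dist N M)) := by
    have := (myNetLim_tendsto N M hN hM).comp hswap
    refine this.congr fun p => ?_
    simp [Function.comp, dist_comm]
  exact tendsto_nhds_unique h1 (myNetLim_tendsto M N hM hN)

lemma myNetLim_triangle {X : Type} [PseudoMetricSpace X] (N M R : CNet X)
    (hN : FCauchy dist N.Φ) (hM : FCauchy dist M.Φ) (hR : FCauchy dist R.Φ) :
    netLim dist N R ≤ netLim dist N M + netLim dist M R := by
  refine le_of_forall_pos_le_add fun ε hε => ?_
  have hε3 : (0:ℝ) < ε / 3 := by linarith
  obtain ⟨⟨a₁, c₁⟩, h₁⟩ := myNetLim_event N R hN hR hε3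
  obtain ⟨⟨a₂, b₂⟩, h₂⟩ := myNetLim_event N M hN hM hε3
  obtain ⟨⟨b₃, c₃⟩, h₃⟩ := myNetLim_event M R hM hR hε3
  obtain ⟨a, ha1, ha2⟩ := exists_ge_ge a₁ a₂
  obtain ⟨b, hb2, hb3⟩ := exists_ge_ge b₂ b₃
  obtain ⟨c, hc1, hc3⟩ := exists_ge_ge c₁ c₃
  have e1 := h₁ (a, c) ⟨ha1, hc1⟩
  have e2 := h₂ (a, b) ⟨ha2, hb2⟩
  have e3 := h₃ (b, c) ⟨hb3, hc3⟩
  simp only [abs_sub_lt_iff] at e1 e2 e3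
  have tri := dist_triangle (N.Φ a) (M.Φ b) (R.Φ c)
  linarith [e1.1, e1.2, e2.1, e2.2, e3.1, e3.2]

/-- d* is well defined (independent of the choice of representatives of the
equivalence classes) and is a pseudometric on X*. -/
theorem dstar_well_defined_pseudometric {X Y : Type} [PseudoMetricSpace X] [TopologicalSpace Y]
    (f : X → Y) (hf : IsMetricOnMap f) :
    (∀ (y y' : Y) (N N' : TNet dist f y) (M M' : TNet dist f y'),
       EquivNets dist N.1 N'.1 → EquivNets dist M.1 M'.1 →
       netLim dist N.1 M.1 = netLim dist N'.1 M'.1) ∧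
    (∀ p : Xstar dist f, dstar dist f p p = 0) ∧
    (∀ p q : Xstar dist f, 0 ≤ dstar dist f p q) ∧
    (∀ p q : Xstar dist f, dstar dist f p q = dstar dist f q p) ∧
    (∀ p q r : Xstar dist f, dstar dist f p r ≤ dstar dist f p q + dstar dist f q r) := by
  constructor
  · intro y y' N N' M M' hNN' hMM'
    exact myNetLim_congr N.1 N'.1 M.1 M'.1 N.2.1 N'.2.1 M.2.1 M'.2.1 hNN' hMM'
  refine ⟨fun p => ?_, fun p q => ?_, fun p q => ?_, fun p q r => ?_⟩
  · exact myNetLim_self _ (Quot.out p.2).2.1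
  · exact myNetLim_nonneg _ _ (Quot.out p.2).2.1 (Quot.out q.2).2.1
  · exact myNetLim_symm _ _ (Quot.out p.2).2.1 (Quot.out q.2).2.1
  · exact myNetLim_triangle _ _ _ (Quot.out p.2).2.1 (Quot.out q.2).2.1 (Quot.out r.2).2.1
end

section
/- Let d be a metric on a mapping f : X → Y with completion (X*, d*, f*) and canonical embedding i. For every Cauchy net Φ : D → X tied to y ∈ Y, the net i ∘ Φ converges in (X*, d*) to the point (Φ*, y) ∈ X*; in particular d*((Φ*,y), i(Φ(α))) → 0 along D. -/
open Filter Topology TopologicalSpace Set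

section Aux

instance prodIsDirected {A B : Type*} [Preorder A] [Preorder B]
    [IsDirected A (· ≤ ·)] [IsDirected B (· ≤ ·)] : IsDirected (A × B) (· ≤ ·) :=
  ⟨fun p q => by
    obtain ⟨a, ha, ha'⟩ := exists_ge_ge p.1 q.1
    obtain ⟨b, hb, hb'⟩ := exists_ge_ge p.2 q.2
    exact ⟨(a, b), ⟨ha, hb⟩, ⟨ha', hb'⟩⟩⟩

variable {X : Type} [PseudoMetricSpace X]

/-- The distance net of two Cauchy nets converges to `netLim`. -/
lemma netLim_tendsto (N M : CNet X) (hN : FCauchy dist N.Φ) (hM : FCauchy dist M.Φ) :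
    Filter.Tendsto (fun p : N.D × M.D => dist (N.Φ p.1) (M.Φ p.2)) atTop
      (nhds (netLim dist N M)) := by
  set g : N.D × M.D → ℝ := fun p => dist (N.Φ p.1) (M.Φ p.2) with hg
  have hc : Cauchy (Filter.map g atTop) := by
    refine Metric.cauchy_iff.2 ⟨Filter.map_neBot, fun ε hε => ?_⟩
    obtain ⟨α0, hα0⟩ := hN (ε / 2) (by linarith)
    obtain ⟨β0, hβ0⟩ := hM (ε / 2) (by linarith)
    refine ⟨g '' {p | (α0, β0) ≤ p}, Filter.image_mem_map (Filter.mem_atTop _), ?_⟩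
    rintro _ ⟨p, hp, rfl⟩ _ ⟨q, hq, rfl⟩
    have h1 := hα0 p.1 hp.1 q.1 hq.1
    have h2 := hβ0 p.2 hp.2 q.2 hq.2
    calc dist (g p) (g q) ≤ dist (N.Φ p.1) (N.Φ q.1) + dist (M.Φ p.2) (M.Φ q.2) :=
          dist_dist_dist_le _ _ _ _
      _ < ε / 2 + ε / 2 := add_lt_add h1 h2
      _ = ε := by ring
  obtain ⟨L, hL⟩ := CompleteSpace.complete hc
  have hT : Filter.Tendsto g atTop (nhds L) := hL
  have : netLim dist N M = L := hT.limUnder_eq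
  rw [this]; exact hT

lemma netLim_nonneg (N M : CNet X) (hN : FCauchy dist N.Φ) (hM : FCauchy dist M.Φ) :
    0 ≤ netLim dist N M :=
  ge_of_tendsto' (netLim_tendsto N M hN hM) fun _ => dist_nonneg

lemma netLim_le (N M : CNet X) (hN : FCauchy dist N.Φ) (hM : FCauchy dist M.Φ)
    {c : ℝ} (h : ∀ᶠ p in (atTop : Filter (N.D × M.D)), dist (N.Φ p.1) (M.Φ p.2) ≤ c) :
    netLim dist N M ≤ c :=
  le_of_tendsto (netLim_tendsto N M hN hM) h

lemma netLim_eq_zero_of_equiv {N M : CNet X} (h : EquivNets dist N M) :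
    netLim dist N M = 0 := by
  have hT : Filter.Tendsto (fun p : N.D × M.D => dist (N.Φ p.1) (M.Φ p.2)) atTop (nhds 0) := by
    rw [Metric.tendsto_nhds]
    intro ε hε
    obtain ⟨γ, γ', hγ⟩ := h ε hε
    refine Filter.eventually_atTop.2 ⟨(γ, γ'), fun p hp => ?_⟩
    have := hγ p.1 hp.1 p.2 hp.2
    rw [Real.dist_eq, sub_zero, abs_of_nonneg dist_nonneg]
    exact this
  exact hT.limUnder_eq

lemma netLim_triangle (N1 N2 N3 : CNet X) (h1 : FCauchy dist N1.Φ)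
    (h2 : FCauchy dist N2.Φ) (h3 : FCauchy dist N3.Φ) :
    netLim dist N1 N3 ≤ netLim dist N1 N2 + netLim dist N2 N3 := by
  by_contra hcon
  push_neg at hcon
  set L12 := netLim dist N1 N2
  set L23 := netLim dist N2 N3
  set L13 := netLim dist N1 N3
  set ε : ℝ := (L13 - (L12 + L23)) / 3 with hεdef
  have hε : 0 < ε := by simp only [hεdef]; linarith
  obtain ⟨a12, h12⟩ := Filter.eventually_atTop.1
    ((Metric.tendsto_nhds.1 (netLim_tendsto N1 N2 h1 h2)) ε hε)
  obtain ⟨a23, h23⟩ := Filter.eventually_atTop.1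
    ((Metric.tendsto_nhds.1 (netLim_tendsto N2 N3 h2 h3)) ε hε)
  obtain ⟨a13, h13⟩ := Filter.eventually_atTop.1
    ((Metric.tendsto_nhds.1 (netLim_tendsto N1 N3 h1 h3)) ε hε)
  obtain ⟨α, hα1, hα2⟩ := exists_ge_ge a12.1 a13.1
  obtain ⟨β, hβ1, hβ2⟩ := exists_ge_ge a12.2 a23.1
  obtain ⟨γ, hγ1, hγ2⟩ := exists_ge_ge a23.2 a13.2
  have e12 := h12 (α, β) ⟨hα1, hβ1⟩
  have e23 := h23 (β, γ) ⟨hβ2, hγ1⟩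
  have e13 := h13 (α, γ) ⟨hα2, hγ2⟩
  rw [Real.dist_eq, abs_lt] at e12 e23 e13
  have tri : dist (N1.Φ α) (N3.Φ γ) ≤ dist (N1.Φ α) (N2.Φ β) + dist (N2.Φ β) (N3.Φ γ) :=
    dist_triangle _ _ _
  simp only at e12 e23 e13
  have : L13 = L12 + L23 + 3 * ε := by simp only [hεdef]; ring
  linarith [e12.2, e23.2, e13.1]

lemma equivNets_refl {N : CNet X} (hN : FCauchy dist N.Φ) : EquivNets dist N N := by
  intro ε hε
  obtain ⟨α0, hα0⟩ := hN ε hε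
  exact ⟨α0, α0, fun α hα α' hα' => hα0 α hα α' hα'⟩

lemma equivNets_symm {N M : CNet X} (h : EquivNets dist N M) : EquivNets dist M N := by
  intro ε hε
  obtain ⟨γ, γ', hγ⟩ := h ε hε
  exact ⟨γ', γ, fun α hα α' hα' => by rw [dist_comm]; exact hγ α' hα' α hα⟩

lemma equivNets_trans {N1 N2 N3 : CNet X} (h1 : EquivNets dist N1 N2)
    (h2 : EquivNets dist N2 N3) : EquivNets dist N1 N3 := by
  intro ε hε
  obtain ⟨γ1, γ2, hA⟩ := h1 (ε / 2) (by linarith)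
  obtain ⟨δ2, δ3, hB⟩ := h2 (ε / 2) (by linarith)
  obtain ⟨β, hβ1, hβ2⟩ := exists_ge_ge γ2 δ2
  refine ⟨γ1, δ3, fun α hα α' hα' => ?_⟩
  calc dist (N1.Φ α) (N3.Φ α') ≤ dist (N1.Φ α) (N2.Φ β) + dist (N2.Φ β) (N3.Φ α') :=
        dist_triangle _ _ _
    _ < ε / 2 + ε / 2 := add_lt_add (hA α hα β hβ1) (hB β hβ2 α' hα')
    _ = ε := by ring

variable {Y : Type} [TopologicalSpace Y]

lemma equivalence_R (f : X → Y) (y : Y) :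
    Equivalence (fun N M : TNet dist f y => EquivNets dist N.1 M.1) :=
  ⟨fun t => equivNets_refl t.2.1, fun h => equivNets_symm h, fun h h' => equivNets_trans h h'⟩

lemma out_equiv_mk (f : X → Y) (y : Y) (t : TNet dist f y)
    (q : Quot (fun N M : TNet dist f y => EquivNets dist N.1 M.1))
    (hq : q = Quot.mk _ t) : EquivNets dist (Quot.out q).1 t.1 := by
  have h : Quot.mk (fun N M : TNet dist f y => EquivNets dist N.1 M.1) (Quot.out q)
      = Quot.mk _ t := by rw [Quot.out_eq, hq]
  exact (equivalence_R f y).eqvGen_iff.1 (Quot.eqvGen_exact h)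

end Aux


lemma constNet_fcauchy {X : Type} [PseudoMetricSpace X] (x : X) :
    FCauchy dist (constNet x).Φ :=
  fun ε hε => ⟨PUnit.unit, fun _ _ _ _ => by simpa [constNet] using hε⟩

/-- for every Cauchy net Φ tied to y, the net i ∘ Φ converges in (X*, d*)
to the point (Φ*, y); in particular d*((Φ*,y), i(Φ(α))) → 0 along D. -/
theorem iEmb_comp_net_tendsto {X Y : Type} [PseudoMetricSpace X] [TopologicalSpace Y]
    (f : X → Y) (hf : IsMetricOnMap f) (y : Y)
    (N : CNet X) (hN : NTC dist f y N) :
    Filter.Tendsto (fun α : N.D => iEmb f (N.Φ α)) atTop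
      (@nhds (Xstar dist f) (ballTop (dstar dist f))
        ⟨y, Quot.mk _ (⟨N, hN⟩ : TNet dist f y)⟩) ∧
    Filter.Tendsto
      (fun α : N.D => dstar dist f
        (⟨y, Quot.mk _ (⟨N, hN⟩ : TNet dist f y)⟩ : Xstar dist f) (iEmb f (N.Φ α)))
      atTop (nhds 0) := by
  classical
  have hNC : FCauchy dist N.Φ := hN.1
  set P : Xstar dist f := ⟨y, Quot.mk _ (⟨N, hN⟩ : TNet dist f y)⟩ with hPdef
  have hA : FCauchy dist (Quot.out P.2).1.Φ := (Quot.out P.2).2.1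
  have hAN : EquivNets dist (Quot.out P.2).1 N :=
    out_equiv_mk f y ⟨N, hN⟩ P.2 rfl
  have hB : ∀ α : N.D, FCauchy dist (Quot.out (iEmb f (N.Φ α)).2).1.Φ :=
    fun α => (Quot.out (iEmb f (N.Φ α)).2).2.1
  have hBx : ∀ α : N.D, EquivNets dist (Quot.out (iEmb f (N.Φ α)).2).1 (constNet (N.Φ α)) :=
    fun α => out_equiv_mk f (f (N.Φ α)) _ (iEmb f (N.Φ α)).2 rfl
  have hrfl : ∀ α : N.D, dstar dist f P (iEmb f (N.Φ α))
      = netLim dist (Quot.out P.2).1 (Quot.out (iEmb f (N.Φ α)).2).1 := fun _ => rfl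
  have hnn : ∀ α : N.D, 0 ≤ dstar dist f P (iEmb f (N.Φ α)) := fun α => by
    rw [hrfl α]; exact netLim_nonneg _ _ hA (hB α)
  have h2main : Filter.Tendsto
      (fun α : N.D => dstar dist f P (iEmb f (N.Φ α))) atTop (nhds 0) := by
    rw [Metric.tendsto_nhds]
    intro ε hε
    obtain ⟨α0, hα0⟩ := hNC (ε / 2) (by linarith)
    refine Filter.eventually_atTop.2 ⟨α0, fun α hα => ?_⟩
    have h1 : netLim dist (Quot.out P.2).1 N = 0 := netLim_eq_zero_of_equiv hAN
    have h2 : netLim dist (constNet (N.Φ α)) (Quot.out (iEmb f (N.Φ α)).2).1 = 0 :=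
      netLim_eq_zero_of_equiv (equivNets_symm (hBx α))
    have h3 : netLim dist N (constNet (N.Φ α)) ≤ ε / 2 := by
      refine netLim_le _ _ hNC (constNet_fcauchy _) ?_
      refine Filter.eventually_atTop.2 ⟨(α0, PUnit.unit), fun p hp => ?_⟩
      exact le_of_lt (hα0 p.1 hp.1 α hα)
    have tri1 : netLim dist (Quot.out P.2).1 (Quot.out (iEmb f (N.Φ α)).2).1
        ≤ netLim dist (Quot.out P.2).1 N + netLim dist N (Quot.out (iEmb f (N.Φ α)).2).1 :=
      netLim_triangle _ _ _ hA hNC (hB α)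
    have tri2 : netLim dist N (Quot.out (iEmb f (N.Φ α)).2).1
        ≤ netLim dist N (constNet (N.Φ α))
          + netLim dist (constNet (N.Φ α)) (Quot.out (iEmb f (N.Φ α)).2).1 :=
      netLim_triangle _ _ _ hNC (constNet_fcauchy _) (hB α)
    rw [Real.dist_eq, sub_zero, abs_of_nonneg (hnn α), hrfl α]
    have : netLim dist (Quot.out P.2).1 (Quot.out (iEmb f (N.Φ α)).2).1 ≤ ε / 2 := by
      rw [h1] at tri1; rw [h2] at tri2; linarith
    linarith
  refine ⟨?_, h2main⟩
  show Filter.Tendsto _ _ (@nhds _ (TopologicalSpace.generateFrom _) P)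
  refine tendsto_nhds_generateFrom_iff.2 ?_
  rintro s ⟨z, ε, rfl⟩ hPs
  have hPs' : dstar dist f z P < ε := hPs
  have hzC : FCauchy dist (Quot.out z.2).1.Φ := (Quot.out z.2).2.1
  have hev := Metric.tendsto_nhds.1 h2main (ε - dstar dist f z P) (by linarith)
  refine Filter.mem_of_superset hev ?_
  intro α hα
  have hα' : dstar dist f P (iEmb f (N.Φ α)) < ε - dstar dist f z P := by
    have h := hα
    rw [Set.mem_setOf_eq, Real.dist_eq, sub_zero, abs_of_nonneg (hnn α)] at h
    exact h
  show dstar dist f z (iEmb f (N.Φ α)) < ε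
  have tri : netLim dist (Quot.out z.2).1 (Quot.out (iEmb f (N.Φ α)).2).1
      ≤ netLim dist (Quot.out z.2).1 (Quot.out P.2).1
        + netLim dist (Quot.out P.2).1 (Quot.out (iEmb f (N.Φ α)).2).1 :=
    netLim_triangle _ _ _ hzC hA (hB α)
  have e1 : dstar dist f z (iEmb f (N.Φ α))
      = netLim dist (Quot.out z.2).1 (Quot.out (iEmb f (N.Φ α)).2).1 := rfl
  have e2 : dstar dist f z P = netLim dist (Quot.out z.2).1 (Quot.out P.2).1 := rfl
  rw [e1]
  rw [e2] at hα' hPs'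
  rw [hrfl α] at hα'
  linarith
end
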